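/- Let A be a commutative multiplicative hyperring with identity, let Q be a (u,v)-absorbing strong 𝒞-hyperideal of A for u,v ∈ ℕ with 2 ≤ v < u, and suppose Q₁,…,Q_v are the only minimal prime 𝒞-hyperideals over Q. If zᵢ ∈ Qᵢ∖(⋃_{j≠i}Q_j) for each i, then for every j, Q_j ∘ ∏_{i≠j} zᵢ ⊆ Q. -/

import Mathlib

/-- A commutative multiplicative hyperring with identity: `(A,+)` is a commutative group,
`∘ = hmul` is a commutative associative hyperoperation with nonempty values, satisfying
`x∘(y+z) ⊆ x∘y + x∘z`, `x∘(−y) = (−x)∘y = −(x∘y)`, and `a ∈ a∘1` for all `a`. -/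
class CommHyperring (A : Type*) [AddCommGroup A] [One A] where
  hmul : A → A → Set A
  hmul_nonempty : ∀ x y : A, (hmul x y).Nonempty
  hmul_comm : ∀ x y : A, hmul x y = hmul y x
  hmul_assoc : ∀ x y z : A, (⋃ a ∈ hmul y z, hmul x a) = ⋃ b ∈ hmul x y, hmul b z
  hmul_add : ∀ x y z : A, hmul x (y + z) ⊆ Set.image2 (· + ·) (hmul x y) (hmul x z)
  hmul_neg : ∀ x y : A, hmul x (-y) = Neg.neg '' hmul x y
  neg_hmul : ∀ x y : A, hmul (-x) y = Neg.neg '' hmul x y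
  one_mem : ∀ a : A, a ∈ hmul a 1

open CommHyperring

variable {A : Type*} [AddCommGroup A] [One A] [CommHyperring A]

/-- The hyperoperation extended to subsets: `X∘Y = ⋃_{x∈X, y∈Y} x∘y`. -/
def sMul (X Y : Set A) : Set A := ⋃ x ∈ X, ⋃ y ∈ Y, hmul x y

/-- The product `x₁∘⋯∘xₙ` of the members of a list. -/
def hProd : List A → Set A
  | [] => {1}
  | [a] => {a}
  | a :: l => ⋃ c ∈ hProd l, hmul a c

/-- `xⁿ = x∘⋯∘x` (`n` factors). -/
def hPow (a : A) (n : ℕ) : Set A := hProd (List.replicate n a)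

/-- `a` is a unit if `1 ∈ a∘b` for some `b`. -/
def IsUnitH (a : A) : Prop := ∃ b : A, (1 : A) ∈ hmul a b

/-- A hyperideal of `A`. -/
def IsHyperideal (B : Set A) : Prop :=
  B.Nonempty ∧ (∀ x ∈ B, ∀ y ∈ B, x - y ∈ B) ∧ ∀ r : A, ∀ x ∈ B, hmul r x ⊆ B

def IsProperHyperideal (B : Set A) : Prop := IsHyperideal B ∧ B ≠ Set.univ

/-- A prime hyperideal. -/
def IsPrimeHyperideal (B : Set A) : Prop :=
  IsProperHyperideal B ∧ ∀ x y : A, hmul x y ⊆ B → x ∈ B ∨ y ∈ B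

/-- The prime radical: the intersection of all prime hyperideals containing `B`
(`= A` if there are none). -/
def radH (B : Set A) : Set A := ⋂₀ {P : Set A | IsPrimeHyperideal P ∧ B ⊆ P}

/-- A `𝒞`-hyperideal: meets a finite product `⇒` contains it. -/
def IsCHyperideal (B : Set A) : Prop :=
  IsHyperideal B ∧ ∀ l : List A, l ≠ [] → (hProd l ∩ B).Nonempty → hProd l ⊆ B

def setAdd (X Y : Set A) : Set A := Set.image2 (· + ·) X Y

/-- The sum `C₁ + ⋯ + Cₙ` of the finite products coded by a list of lists. -/
def sumProds (L : List (List A)) : Set A := L.foldr (fun l S => setAdd (hProd l) S) {0}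

/-- A strong `𝒞`-hyperideal: meets a finite sum of finite products `⇒` contains it. -/
def IsStrongCHyperideal (B : Set A) : Prop :=
  IsHyperideal B ∧ ∀ L : List (List A), L ≠ [] → (∀ l ∈ L, l ≠ []) →
    (sumProds L ∩ B).Nonempty → sumProds L ⊆ B

/-- A `v`-absorbing hyperideal. -/
def IsNAbsorbing (Q : Set A) (v : ℕ) : Prop :=
  IsProperHyperideal Q ∧ ∀ l : List A, l.length = v + 1 → hProd l ⊆ Q →
    ∃ l', l'.Sublist l ∧ l'.length = v ∧ hProd l' ⊆ Q

/-- A `(u,v)`-absorbing hyperideal. -/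
def IsUVAbsorbing (Q : Set A) (u v : ℕ) : Prop :=
  IsProperHyperideal Q ∧ ∀ l : List A, l.length = u → (∀ x ∈ l, ¬IsUnitH x) → hProd l ⊆ Q →
    ∃ l', l'.Sublist l ∧ l'.length = v ∧ hProd l' ⊆ Q

/-- An `AB`-`(u,v)`-absorbing hyperideal. -/
def IsABUVAbsorbing (Q : Set A) (u v : ℕ) : Prop :=
  IsProperHyperideal Q ∧ ∀ l : List A, l.length = u → hProd l ⊆ Q →
    ∃ l', l'.Sublist l ∧ l'.length = v ∧ hProd l' ⊆ Q

/-- A `(u,v)`-absorbing prime hyperideal. -/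
def IsUVAbsorbingPrime (Q : Set A) (u v : ℕ) : Prop :=
  IsProperHyperideal Q ∧ ∀ l : List A, l.length = u → (∀ x ∈ l, ¬IsUnitH x) → hProd l ⊆ Q →
    hProd (l.take v) ⊆ Q ∨ hProd (l.drop v) ⊆ Q

/-- A maximal hyperideal. -/
def IsMaximalHyperideal (M : Set A) : Prop :=
  IsProperHyperideal M ∧ ∀ B : Set A, IsHyperideal B → M ⊂ B → B = Set.univ

/-- `A` is local if it has exactly one maximal hyperideal. -/
def IsLocalH (A : Type*) [AddCommGroup A] [One A] [CommHyperring A] : Prop :=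
  ∃! M : Set A, IsMaximalHyperideal M

/-- `P` is a prime hyperideal minimal over `Q`. -/
def MinimalPrimeOver (Q P : Set A) : Prop :=
  IsPrimeHyperideal P ∧ Q ⊆ P ∧
    ∀ P' : Set A, IsPrimeHyperideal P' → Q ⊆ P' → P' ⊆ P → P' = P

/-- `Iⁿ = ⋃ {x₁∘⋯∘xₙ : xᵢ ∈ I}`. -/
def idealPow (I : Set A) (n : ℕ) : Set A :=
  ⋃ l ∈ {l : List A | l.length = n ∧ ∀ x ∈ l, x ∈ I}, hProd l

/-- `I₁∘⋯∘Iₙ = ⋃ {x₁∘⋯∘xₙ : xᵢ ∈ Iᵢ}`. -/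
def idealProd (L : List (Set A)) : Set A :=
  ⋃ l ∈ {l : List A | List.Forall₂ (· ∈ ·) l L}, hProd l

/-- `Abs(Q)`: the minimal `v` such that `Q` is `v`-absorbing. -/
noncomputable def AbsN (Q : Set A) : ℕ := sInf {v : ℕ | IsNAbsorbing Q v}

/-- `abs(Q)`: the minimal `v` such that `Q` is `(Abs(Q)+1, v)`-absorbing. -/
noncomputable def absN (Q : Set A) : ℕ := sInf {v : ℕ | IsUVAbsorbing Q (AbsN Q + 1) v}

/-- A primary hyperideal. -/
def IsPrimaryHyperideal (Q : Set A) : Prop :=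
  IsProperHyperideal Q ∧ ∀ x y : A, hmul x y ⊆ Q → x ∈ Q ∨ ∃ t : ℕ, 1 ≤ t ∧ hPow y t ⊆ Q

/-- `A` is a hyperfield if every nonzero element is a unit. -/
def IsHyperfield (A : Type*) [AddCommGroup A] [One A] [CommHyperring A] : Prop :=
  ∀ x : A, x ≠ 0 → IsUnitH x

/-- `(Q : x) = {a : a∘x ⊆ Q}`. -/
def colonH (Q : Set A) (x : A) : Set A := {a : A | hmul a x ⊆ Q}

/-- `J(A)`: the intersection of all maximal hyperideals of `A`. -/
def JacobsonH (A : Type*) [AddCommGroup A] [One A] [CommHyperring A] : Set A :=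
  ⋂₀ {M : Set A | IsMaximalHyperideal M}

/-!
Let `w₁, …, w_v` satisfy `wᵢ ∈ Pᵢ` and `wᵢ ∉ P_k` for `k ≠ i`. A product `t ∈ w₁∘⋯∘w_v` lies
in every `Pᵢ`, hence in every minimal prime over `Q` (minimal primes over a `𝒞`-hyperideal are
`𝒞`-hyperideals), so some power of `t` lies in `Q`. Written out, that power is a long product of
the `wᵢ` inside `Q`; absorption brings it down to `v` factors, which must meet every `Pᵢ` and so
are exactly `w₁, …, w_v`. Hence `w₁∘⋯∘w_v ⊆ Q`.

Replacing `z_j` by any `x ∈ P_j` outside the other `P_k` shows that such `x` lie in the hyperideal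
`(Q : y)` for every `y ∈ ∏_{i≠j} zᵢ`, and a prime-avoidance argument extends this to all of `P_j`.
-/

lemma mem_sMul {X Y : Set A} {e : A} : e ∈ sMul X Y ↔ ∃ x ∈ X, ∃ y ∈ Y, e ∈ hmul x y := by
  simp [sMul]

lemma sMul_mono {X Y X' Y' : Set A} (hX : X ⊆ X') (hY : Y ⊆ Y') : sMul X Y ⊆ sMul X' Y' :=
  Set.biUnion_mono hX fun _ _ => Set.biUnion_mono hY fun _ _ => subset_rfl

lemma sMul_comm (X Y : Set A) : sMul X Y = sMul Y X := by
  ext e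
  simp only [mem_sMul]
  constructor <;> rintro ⟨x, hx, y, hy, h⟩ <;> exact ⟨y, hy, x, hx, by rwa [hmul_comm]⟩

lemma sMul_assoc (X Y Z : Set A) : sMul (sMul X Y) Z = sMul X (sMul Y Z) := by
  ext e
  simp only [mem_sMul]
  constructor
  · rintro ⟨b, ⟨x, hx, y, hy, hb⟩, z, hz, he⟩
    have h : e ∈ ⋃ b ∈ hmul x y, hmul b z := Set.mem_biUnion hb he
    rw [← hmul_assoc] at h
    obtain ⟨a, ha, h⟩ := Set.mem_iUnion₂.1 h
    exact ⟨x, hx, a, ⟨y, hy, z, hz, ha⟩, h⟩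
  · rintro ⟨x, hx, a, ⟨y, hy, z, hz, ha⟩, he⟩
    have h : e ∈ ⋃ a ∈ hmul y z, hmul x a := Set.mem_biUnion ha he
    rw [hmul_assoc] at h
    obtain ⟨b, hb, h⟩ := Set.mem_iUnion₂.1 h
    exact ⟨b, ⟨x, hx, y, hy, hb⟩, z, hz, h⟩

lemma hProd_singleton (a : A) : hProd [a] = {a} := rfl

lemma hProd_pair (a b : A) : hProd [a, b] = hmul a b := by
  simp [hProd]

lemma hProd_cons (a : A) {l : List A} (hl : l ≠ []) : hProd (a :: l) = sMul {a} (hProd l) := by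
  cases l with
  | nil => exact absurd rfl hl
  | cons b t => simp [hProd, sMul]

lemma hProd_append {l₁ l₂ : List A} (h₁ : l₁ ≠ []) (h₂ : l₂ ≠ []) :
    hProd (l₁ ++ l₂) = sMul (hProd l₁) (hProd l₂) := by
  induction l₁ with
  | nil => exact absurd rfl h₁
  | cons a t ih =>
    rcases eq_or_ne t [] with rfl | ht
    · exact hProd_cons a h₂
    · rw [List.cons_append, hProd_cons a (by simp [ht]), hProd_cons a ht, ih ht, sMul_assoc]

lemma hProd_perm {l l' : List A} (h : l.Perm l') : hProd l = hProd l' := by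
  induction h with
  | nil => rfl
  | @cons x l₁ l₂ h ih =>
    rcases eq_or_ne l₁ [] with rfl | hne
    · rw [List.Perm.nil_eq h]
    · rw [hProd_cons x hne, hProd_cons x fun h' => hne (h'.symm ▸ h).eq_nil, ih]
  | swap x y l =>
    rcases eq_or_ne l [] with rfl | hne
    · rw [hProd_pair, hProd_pair, hmul_comm]
    · rw [hProd_cons y (by simp), hProd_cons x hne, hProd_cons x (by simp), hProd_cons y hne,
        ← sMul_assoc, ← sMul_assoc, sMul_comm {y}]
  | trans _ _ ih₁ ih₂ => rw [ih₁, ih₂]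

lemma hProd_nonempty (l : List A) : (hProd l).Nonempty := by
  induction l with
  | nil => exact ⟨1, rfl⟩
  | cons a t ih =>
    rcases eq_or_ne t [] with rfl | ht
    · exact ⟨a, rfl⟩
    · obtain ⟨c, hc⟩ := ih
      obtain ⟨e, he⟩ := hmul_nonempty a c
      exact ⟨e, by rw [hProd_cons a ht]; exact mem_sMul.2 ⟨a, rfl, c, hc, he⟩⟩

lemma hmul_subset_hProd_append {w₁ w₂ : A} {l₁ l₂ : List A} (h₁ : l₁ ≠ []) (h₂ : l₂ ≠ [])
    (hw₁ : w₁ ∈ hProd l₁) (hw₂ : w₂ ∈ hProd l₂) : hmul w₁ w₂ ⊆ hProd (l₁ ++ l₂) := by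
  rw [hProd_append h₁ h₂]
  exact fun e he => mem_sMul.2 ⟨w₁, hw₁, w₂, hw₂, he⟩

lemma hProd_cons_subset_hProd_append {c : A} {l : List A} (r : List A) (hl : l ≠ [])
    (hc : c ∈ hProd l) : hProd (c :: r) ⊆ hProd (l ++ r) := by
  rcases eq_or_ne r [] with rfl | hr
  · simpa [hProd_singleton] using hc
  · rw [hProd_cons c hr, hProd_append hl hr]
    exact sMul_mono (Set.singleton_subset_iff.2 hc) subset_rfl

lemma hProd_subset_hProd_flatMap {l : List A} {f : A → List A}
    (hf : ∀ e ∈ l, e ∈ hProd (f e) ∧ f e ≠ []) : hProd l ⊆ hProd (l.flatMap f) := by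
  induction l with
  | nil => exact subset_rfl
  | cons e t ih =>
    obtain ⟨he, hfe⟩ := hf e List.mem_cons_self
    rw [List.flatMap_cons]
    rcases eq_or_ne t [] with rfl | ht
    · simpa [hProd_singleton] using he
    · have ht' : t.flatMap f ≠ [] := fun h => by
        obtain ⟨a, ha⟩ := List.exists_mem_of_ne_nil t ht
        exact (hf a (List.mem_cons_of_mem e ha)).2 (List.flatMap_eq_nil_iff.1 h a ha)
      rw [hProd_cons e ht, hProd_append hfe ht']
      exact sMul_mono (Set.singleton_subset_iff.2 he)
        (ih fun a ha => hf a (List.mem_cons_of_mem e ha))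

namespace IsHyperideal

variable {B : Set A}

lemma zero_mem (hB : IsHyperideal B) : (0 : A) ∈ B := by
  obtain ⟨x, hx⟩ := hB.1
  simpa using hB.2.1 x hx x hx

lemma neg_mem (hB : IsHyperideal B) {x : A} (hx : x ∈ B) : -x ∈ B := by
  simpa using hB.2.1 0 hB.zero_mem x hx

lemma add_mem (hB : IsHyperideal B) {x y : A} (hx : x ∈ B) (hy : y ∈ B) : x + y ∈ B := by
  simpa using hB.2.1 x hx (-y) (hB.neg_mem hy)

lemma hmul_subset_right (hB : IsHyperideal B) {x : A} (hx : x ∈ B) (r : A) : hmul x r ⊆ B :=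
  hmul_comm x r ▸ hB.2.2 r x hx

lemma hProd_subset (hB : IsHyperideal B) {l : List A} {e : A} (hel : e ∈ l) (heB : e ∈ B) :
    hProd l ⊆ B := by
  induction l with
  | nil => simp at hel
  | cons a t ih =>
    rcases eq_or_ne t [] with rfl | ht
    · rw [List.mem_singleton.1 hel] at heB
      simpa [hProd_singleton] using heB
    · rw [hProd_cons a ht]
      intro w hw
      obtain ⟨_, rfl, c, hc, hw⟩ := mem_sMul.1 hw
      rcases List.mem_cons.1 hel with rfl | het
      · exact hB.hmul_subset_right heB c hw
      · exact hB.2.2 _ c (ih het hc) hw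

lemma hProd_append_subset (hB : IsHyperideal B) {l : List A} (hl : l ≠ []) (h : hProd l ⊆ B)
    (r : List A) : hProd (l ++ r) ⊆ B := by
  rcases eq_or_ne r [] with rfl | hr
  · simpa using h
  · rw [hProd_append hl hr]
    intro e he
    obtain ⟨x, hx, y, -, he⟩ := mem_sMul.1 he
    exact hB.hmul_subset_right (h hx) y he

lemma hmul_subset_of_hProd_cons_subset (hB : IsHyperideal B) {x y : A} {l : List A}
    (h : hProd (x :: l) ⊆ B) (hy : y ∈ hProd l) : hmul x y ⊆ B := by
  rcases eq_or_ne l [] with rfl | hl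
  · rw [hy]
    exact hB.hmul_subset_right (h rfl) 1
  · rw [hProd_cons x hl] at h
    exact fun e he => h (mem_sMul.2 ⟨x, rfl, y, hy, he⟩)

end IsHyperideal

lemma isHyperideal_colonH {Q : Set A} (hQ : IsHyperideal Q) (y : A) :
    IsHyperideal (colonH Q y) := by
  refine ⟨⟨0, hQ.hmul_subset_right hQ.zero_mem y⟩, fun a ha b hb => ?_, fun r a ha => ?_⟩
  · intro e he
    rw [hmul_comm, sub_eq_add_neg] at he
    obtain ⟨f, hf, g, hg, rfl⟩ := hmul_add y a (-b) he
    rw [hmul_neg] at hg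
    obtain ⟨g, hg, rfl⟩ := hg
    simpa [sub_eq_add_neg] using hQ.2.1 f (ha (hmul_comm y a ▸ hf)) g (hb (hmul_comm y b ▸ hg))
  · intro e he e' he'
    have h : e' ∈ ⋃ d ∈ hmul r a, hmul d y := Set.mem_biUnion he he'
    rw [← hmul_assoc] at h
    obtain ⟨d, hd, h⟩ := Set.mem_iUnion₂.1 h
    exact hQ.2.2 r d (ha hd) h

lemma IsProperHyperideal.one_notMem {B : Set A} (hB : IsProperHyperideal B) : (1 : A) ∉ B :=
  fun h => hB.2 (Set.eq_univ_of_forall fun r => hB.1.2.2 r 1 h (one_mem r))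

lemma IsProperHyperideal.not_isUnitH {B : Set A} (hB : IsProperHyperideal B) {x : A}
    (hx : x ∈ B) : ¬IsUnitH x := fun ⟨b, hb⟩ =>
  hB.one_notMem (hB.1.hmul_subset_right hx b hb)

lemma not_isUnitH_of_mem_hmul {a b c : A} (ha : ¬IsUnitH a) (hc : c ∈ hmul a b) :
    ¬IsUnitH c := by
  rintro ⟨e, he⟩
  have h : (1 : A) ∈ hProd ([a, b] ++ [e]) :=
    hmul_subset_hProd_append (by simp) (by simp) (by rwa [hProd_pair]) rfl he
  rw [List.cons_append, hProd_cons a (by simp)] at h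
  obtain ⟨_, rfl, d, -, hd⟩ := mem_sMul.1 h
  exact ha ⟨d, hd⟩

lemma IsPrimeHyperideal.exists_mem_of_hProd_subset {B : Set A} (hB : IsPrimeHyperideal B)
    {l : List A} (h : hProd l ⊆ B) : ∃ e ∈ l, e ∈ B := by
  induction l with
  | nil => exact absurd (h rfl) hB.1.one_notMem
  | cons a t ih =>
    rcases eq_or_ne t [] with rfl | ht
    · exact ⟨a, List.mem_singleton_self a, h rfl⟩
    by_cases haB : a ∈ B
    · exact ⟨a, List.mem_cons_self, haB⟩
    suffices htB : hProd t ⊆ B by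
      obtain ⟨e, he, heB⟩ := ih htB
      exact ⟨e, List.mem_cons_of_mem a he, heB⟩
    intro c hc
    rw [hProd_cons a ht] at h
    exact (hB.2 a c fun w hw => h (mem_sMul.2 ⟨a, rfl, c, hc, hw⟩)).resolve_left haB

lemma IsPrimeHyperideal.notMem_of_mem_hProd {B : Set A} (hB : IsPrimeHyperideal B)
    (hC : IsCHyperideal B) {l : List A} (hl : ∀ e ∈ l, e ∉ B) {w : A} (hw : w ∈ hProd l) :
    w ∉ B := by
  intro hwB
  rcases eq_or_ne l [] with rfl | hne
  · exact hB.1.one_notMem (hw ▸ hwB)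
  obtain ⟨e, he, heB⟩ := hB.exists_mem_of_hProd_subset (hC.2 l hne ⟨w, hw, hwB⟩)
  exact hl e he heB

lemma IsCHyperideal.disjoint_of_not_subset {B : Set A} (hB : IsCHyperideal B) {l : List A}
    (hl : l ≠ []) (h : ¬hProd l ⊆ B) : Disjoint (hProd l) B :=
  Set.disjoint_iff_inter_eq_empty.2 (Set.not_nonempty_iff_eq_empty.1 (mt (hB.2 l hl) h))

lemma IsStrongCHyperideal.isCHyperideal {B : Set A} (hB : IsStrongCHyperideal B) :
    IsCHyperideal B := by
  have hsum : ∀ l : List A, sumProds [l] = hProd l := fun l => by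
    ext w
    simp [sumProds, setAdd]
  refine ⟨hB.1, fun l hl hne => ?_⟩
  rw [← hsum] at hne ⊢
  exact hB.2 [l] (by simp) (by simpa using hl) hne

/-- The hyperideal generated by a hyperideal `M` and `a`: the sums `m + c₁ + ⋯ + cₖ` with
`m ∈ M` and `cᵢ ∈ rᵢ∘a`. -/
inductive MemAdjoin (M : Set A) (a : A) : A → Prop
  | of_mem {m : A} : m ∈ M → MemAdjoin M a m
  | add {r c s : A} : c ∈ hmul r a → MemAdjoin M a s → MemAdjoin M a (c + s)

namespace MemAdjoin

variable {M : Set A} {a : A}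

lemma mem_self (hM : IsHyperideal M) : MemAdjoin M a a := by
  simpa using add (hmul_comm a 1 ▸ one_mem a) (of_mem (a := a) hM.zero_mem)

lemma neg (hM : IsHyperideal M) {x : A} (hx : MemAdjoin M a x) : MemAdjoin M a (-x) := by
  induction hx with
  | of_mem hm => exact of_mem (hM.neg_mem hm)
  | @add r c s hc _ ih =>
    rw [neg_add]
    exact add (r := -r) (by rw [neg_hmul]; exact ⟨c, hc, rfl⟩) ih

lemma add_mem (hM : IsHyperideal M) {x y : A} (hx : MemAdjoin M a x) (hy : MemAdjoin M a y) :
    MemAdjoin M a (x + y) := by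
  induction hx with
  | @of_mem m hm =>
    induction hy with
    | of_mem hm' => exact of_mem (hM.add_mem hm hm')
    | add hc _ ih => rw [add_left_comm]; exact add hc ih
  | add hc _ ih => rw [add_assoc]; exact add hc ih

lemma hmul_subset (hM : IsHyperideal M) {x : A} (hx : MemAdjoin M a x) (r : A) :
    hmul r x ⊆ {y | MemAdjoin M a y} := by
  induction hx with
  | of_mem hm => exact fun e he => of_mem (hM.2.2 r _ hm he)
  | @add r' c s hc _ ih =>
    intro e he
    obtain ⟨f, hf, g, hg, rfl⟩ := hmul_add r c s he
    have hf' : f ∈ ⋃ c ∈ hmul r' a, hmul r c := Set.mem_biUnion hc hf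
    rw [hmul_assoc] at hf'
    obtain ⟨d, -, hfd⟩ := Set.mem_iUnion₂.1 hf'
    exact add hfd (ih hg)

lemma hmul_subset_of_forall (hM : IsHyperideal M) {x y : A}
    (h : ∀ r, ∀ c ∈ hmul r a, hmul c y ⊆ M) (hx : MemAdjoin M a x) : hmul x y ⊆ M := by
  induction hx with
  | of_mem hm => exact hM.hmul_subset_right hm y
  | @add r c s hc _ ih =>
    intro e he
    rw [hmul_comm] at he
    obtain ⟨f, hf, g, hg, rfl⟩ := hmul_add y c s he
    exact hM.add_mem (h r c hc (hmul_comm y c ▸ hf)) (ih (hmul_comm y s ▸ hg))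

end MemAdjoin

lemma isHyperideal_memAdjoin {M : Set A} (hM : IsHyperideal M) (a : A) :
    IsHyperideal {x | MemAdjoin M a x} :=
  ⟨⟨a, .mem_self hM⟩, fun _ hx _ hy => by simpa [sub_eq_add_neg] using hx.add_mem hM (hy.neg hM),
    fun r _ hx => hx.hmul_subset hM r⟩

lemma hmul_hmul_subset {M : Set A} (hM : IsHyperideal M) {a b c d r r' : A}
    (hab : hmul a b ⊆ M) (hc : c ∈ hmul r a) (hd : d ∈ hmul r' b) : hmul c d ⊆ M := by
  have hperm : ([r, a] ++ [r', b]).Perm ([r, r'] ++ [a, b]) :=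
    List.Perm.cons r (List.Perm.swap r' a [b])
  intro e he
  have h := hmul_subset_hProd_append (l₁ := [r, a]) (l₂ := [r', b]) (by simp) (by simp)
    (by rwa [hProd_pair]) (by rwa [hProd_pair]) he
  rw [hProd_perm hperm, hProd_append (by simp) (by simp), hProd_pair, hProd_pair] at h
  obtain ⟨x, -, y, hy, he⟩ := mem_sMul.1 h
  exact hM.2.2 x y (hab hy) he

lemma hmul_subset_of_memAdjoin {M : Set A} (hM : IsHyperideal M) {x y w₁ w₂ : A}
    (hxy : hmul x y ⊆ M) (h₁ : MemAdjoin M x w₁) (h₂ : MemAdjoin M y w₂) : hmul w₁ w₂ ⊆ M :=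
  h₁.hmul_subset_of_forall hM fun _ c hc => hmul_comm w₂ c ▸
    h₂.hmul_subset_of_forall hM fun _ _ hd => hmul_comm c _ ▸ hmul_hmul_subset hM hxy hc hd

lemma isHyperideal_sUnion_of_isChain {c : Set (Set A)} (hc : ∀ B ∈ c, IsHyperideal B)
    (hchain : IsChain (· ⊆ ·) c) (hne : c.Nonempty) : IsHyperideal (⋃₀ c) := by
  obtain ⟨B₀, hB₀⟩ := hne
  refine ⟨⟨0, B₀, hB₀, (hc B₀ hB₀).zero_mem⟩, ?_, ?_⟩
  · rintro x ⟨B₁, hB₁, hx⟩ y ⟨B₂, hB₂, hy⟩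
    rcases hchain.total hB₁ hB₂ with h | h
    · exact ⟨B₂, hB₂, (hc B₂ hB₂).2.1 x (h hx) y hy⟩
    · exact ⟨B₁, hB₁, (hc B₁ hB₁).2.1 x hx y (h hy)⟩
  · rintro r x ⟨B, hB, hx⟩ e he
    exact ⟨B, hB, (hc B hB).2.2 r x hx he⟩

lemma isHyperideal_sInter {c : Set (Set A)} (hc : ∀ B ∈ c, IsHyperideal B) :
    IsHyperideal (⋂₀ c) :=
  ⟨⟨0, fun B hB => (hc B hB).zero_mem⟩,
    fun x hx y hy B hB => (hc B hB).2.1 x (hx B hB) y (hy B hB),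
    fun r x hx _ he B hB => (hc B hB).2.2 r x (hx B hB) he⟩

lemma isPrimeHyperideal_sInter_of_isChain {c : Set (Set A)} (hc : ∀ B ∈ c, IsPrimeHyperideal B)
    (hchain : IsChain (· ⊆ ·) c) (hne : c.Nonempty) : IsPrimeHyperideal (⋂₀ c) := by
  obtain ⟨B₀, hB₀⟩ := hne
  refine ⟨⟨isHyperideal_sInter fun B hB => (hc B hB).1.1, fun h => (hc B₀ hB₀).1.2 ?_⟩, ?_⟩
  · exact Set.eq_univ_of_univ_subset (h ▸ Set.sInter_subset_of_mem hB₀)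
  intro x y hxy
  by_contra! hcon
  obtain ⟨hx, hy⟩ := hcon
  simp only [Set.mem_sInter, not_forall] at hx hy
  obtain ⟨B₁, hB₁, hxB₁⟩ := hx
  obtain ⟨B₂, hB₂, hyB₂⟩ := hy
  have hB : ∀ B ∈ c, x ∈ B ∨ y ∈ B := fun B hB =>
    (hc B hB).2 x y (hxy.trans (Set.sInter_subset_of_mem hB))
  rcases hchain.total hB₁ hB₂ with h | h
  · exact (hB B₁ hB₁).elim hxB₁ fun hy => hyB₂ (h hy)
  · exact (hB B₂ hB₂).elim (fun hx => hxB₁ (h hx)) hyB₂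

/-- A hyperideal maximal among those containing `Q` and avoiding all products of elements of `T`
is prime. -/
lemma exists_isPrimeHyperideal_disjoint {Q T : Set A} (hQ : IsHyperideal Q) (hT : T.Nonempty)
    (hdisj : ∀ l : List A, l ≠ [] → (∀ e ∈ l, e ∈ T) → Disjoint (hProd l) Q) :
    ∃ M, IsPrimeHyperideal M ∧ Q ⊆ M ∧ Disjoint T M := by
  let S : Set (Set A) := {B | IsHyperideal B ∧ Q ⊆ B ∧
    ∀ l : List A, l ≠ [] → (∀ e ∈ l, e ∈ T) → Disjoint (hProd l) B}
  have hchain : ∀ c ⊆ S, IsChain (· ⊆ ·) c → c.Nonempty → ∃ ub ∈ S, ∀ B ∈ c, B ⊆ ub := by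
    intro c hcS hc hne
    refine ⟨⋃₀ c, ⟨isHyperideal_sUnion_of_isChain (fun B hB => (hcS hB).1) hc hne, ?_, ?_⟩,
      fun B hB => Set.subset_sUnion_of_mem hB⟩
    · obtain ⟨B₀, hB₀⟩ := hne
      exact (hcS hB₀).2.1.trans (Set.subset_sUnion_of_mem hB₀)
    · exact fun l hl hlT => Set.disjoint_sUnion_right.2 fun B hB => (hcS hB).2.2 l hl hlT
  obtain ⟨M, -, hM⟩ := zorn_subset_nonempty S hchain Q ⟨hQ, subset_rfl, hdisj⟩
  obtain ⟨hMi, hQM, hMd⟩ := hM.prop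
  have hTM : Disjoint T M := Set.disjoint_left.2 fun e he heM =>
    Set.disjoint_left.1 (hMd [e] (by simp) (by simpa using he)) rfl heM
  have hescape : ∀ a ∉ M, ∃ l : List A, l ≠ [] ∧ (∀ e ∈ l, e ∈ T) ∧
      ∃ w ∈ hProd l, MemAdjoin M a w := by
    intro a ha
    by_contra! h
    have hS : {x | MemAdjoin M a x} ∈ S :=
      ⟨isHyperideal_memAdjoin hMi a, fun q hq => .of_mem (hQM hq),
        fun l hl hlT => Set.disjoint_left.2 (h l hl hlT)⟩
    exact ha (hM.eq_of_subset hS (fun m hm => .of_mem hm) ▸ MemAdjoin.mem_self hMi)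
  refine ⟨M, ⟨⟨hMi, fun h => ?_⟩, fun x y hxy => ?_⟩, hQM, hTM⟩
  · obtain ⟨e, he⟩ := hT
    exact Set.disjoint_left.1 hTM he (h ▸ Set.mem_univ e)
  by_contra! hcon
  obtain ⟨l₁, hl₁, hl₁T, w₁, hw₁, hw₁M⟩ := hescape x hcon.1
  obtain ⟨l₂, hl₂, hl₂T, w₂, hw₂, hw₂M⟩ := hescape y hcon.2
  obtain ⟨e, he⟩ := hmul_nonempty w₁ w₂
  have hl : ∀ e ∈ l₁ ++ l₂, e ∈ T := fun e he =>
    (List.mem_append.1 he).elim (hl₁T e) (hl₂T e)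
  exact Set.disjoint_left.1 (hMd _ (by simp [hl₁]) hl)
    (hmul_subset_hProd_append hl₁ hl₂ hw₁ hw₂ he) (hmul_subset_of_memAdjoin hMi hxy hw₁M hw₂M he)

lemma exists_minimalPrimeOver_subset {Q M : Set A} (hM : IsPrimeHyperideal M) (hQM : Q ⊆ M) :
    ∃ N, MinimalPrimeOver Q N ∧ N ⊆ M := by
  let S : Set (Set A) := {N | IsPrimeHyperideal N ∧ Q ⊆ N}
  have hchain : ∀ c ⊆ S, IsChain (· ⊆ ·) c → c.Nonempty → ∃ lb ∈ S, ∀ B ∈ c, lb ⊆ B :=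
    fun c hcS hc hne => ⟨⋂₀ c,
      ⟨isPrimeHyperideal_sInter_of_isChain (fun B hB => (hcS hB).1) hc hne,
        Set.subset_sInter fun B hB => (hcS hB).2⟩,
      fun B hB => Set.sInter_subset_of_mem hB⟩
  obtain ⟨N, hNM, hN⟩ := zorn_superset_nonempty S hchain M ⟨hM, hQM⟩
  exact ⟨N, ⟨hN.prop.1, hN.prop.2, fun P hP hQP hPN => hN.eq_of_subset ⟨hP, hQP⟩ hPN⟩, hNM⟩

namespace MinimalPrimeOver

variable {Q N : Set A}

/-- Otherwise a prime avoiding all such products would lie below `N` without containing `x`. -/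
lemma exists_hProd_subset (hQ : IsCHyperideal Q) (hN : MinimalPrimeOver Q N) {x : A}
    (hx : x ∈ N) : ∃ l : List A, l ≠ [] ∧ (∀ e ∈ l, e = x ∨ e ∉ N) ∧ hProd l ⊆ Q := by
  by_contra! h
  obtain ⟨M, hM, hQM, hTM⟩ := exists_isPrimeHyperideal_disjoint (T := {e | e = x ∨ e ∉ N}) hQ.1
    ⟨x, .inl rfl⟩ fun l hl hlT => hQ.disjoint_of_not_subset hl (h l hl hlT)
  have hMN : M ⊆ N := fun e heM => by
    by_contra heN
    exact Set.disjoint_left.1 hTM (.inr heN) heM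
  exact Set.disjoint_left.1 hTM (.inl rfl) (hN.2.2 M hM hQM hMN ▸ hx)

/-- If `l` has no factor in `N` but `hProd l` meets `N` in `x`, substituting `l` for `x` in a
product from `exists_hProd_subset` gives a product inside `Q ⊆ N` with no factor in `N`. -/
lemma isCHyperideal (hQ : IsCHyperideal Q) (hN : MinimalPrimeOver Q N) : IsCHyperideal N := by
  classical
  refine ⟨hN.1.1.1, fun l hl ⟨x, hxl, hxN⟩ => ?_⟩
  by_contra hlN
  have hlN' : ∀ e ∈ l, e ∉ N := fun e hel heN => hlN (hN.1.1.1.hProd_subset hel heN)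
  obtain ⟨l', hl', hl'x, hl'Q⟩ := hN.exists_hProd_subset hQ hxN
  let f : A → List A := fun e => if e = x then l else [e]
  have hsub : hProd l' ⊆ hProd (l'.flatMap f) := hProd_subset_hProd_flatMap fun e _ => by
    by_cases he : e = x
    · simpa [f, he] using ⟨hxl, hl⟩
    · simp [f, he, hProd_singleton]
  have hne : l'.flatMap f ≠ [] := by
    obtain ⟨e, he⟩ := List.exists_mem_of_ne_nil l' hl'
    refine fun h => ?_
    have := List.flatMap_eq_nil_iff.1 h e he
    by_cases hex : e = x <;> simp [f, hex, hl] at this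
  obtain ⟨w, hw⟩ := hProd_nonempty l'
  obtain ⟨e, he, heN⟩ := hN.1.exists_mem_of_hProd_subset
    ((hQ.2 _ hne ⟨w, hsub hw, hl'Q hw⟩).trans hN.2.1)
  obtain ⟨e', he', hef⟩ := List.mem_flatMap.1 he
  by_cases he'x : e' = x
  · exact hlN' e (by simpa [f, he'x] using hef) heN
  · rw [show e = e' by simpa [f, he'x] using hef] at heN
    exact (hl'x e' he').elim he'x (· heN)

end MinimalPrimeOver

lemma exists_hProd_replicate_subset {ι : Type*} {Q : Set A} {P : ι → Set A}
    (hQ : IsCHyperideal Q)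
    (honly : ∀ P' : Set A, IsCHyperideal P' → MinimalPrimeOver Q P' → ∃ i, P' = P i)
    {t : A} (ht : ∀ i, t ∈ P i) : ∃ k, hProd (List.replicate (k + 1) t) ⊆ Q := by
  by_contra! h
  obtain ⟨M, hM, hQM, htM⟩ := exists_isPrimeHyperideal_disjoint (T := {t}) hQ.1 ⟨t, rfl⟩
    fun l hl hlt => by
      obtain ⟨k, hk⟩ := Nat.exists_eq_succ_of_ne_zero (mt List.length_eq_zero_iff.1 hl)
      refine hQ.disjoint_of_not_subset hl ?_
      rw [List.eq_replicate_iff.2 ⟨hk, hlt⟩]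
      exact h k
  obtain ⟨N, hN, hNM⟩ := exists_minimalPrimeOver_subset hM hQM
  obtain ⟨i, rfl⟩ := honly N (hN.isCHyperideal hQ) hN
  exact Set.disjoint_left.1 htM rfl (hNM (ht i))

lemma List.Sublist.exists_sublist_length_eq {α : Type*} {s L : List α} (h : s.Sublist L) {n : ℕ}
    (h₁ : s.length ≤ n) (h₂ : n ≤ L.length) : ∃ m, s.Sublist m ∧ m.Sublist L ∧ m.length = n := by
  induction h generalizing n with
  | slnil => exact ⟨[], .slnil, .slnil, by simp at h₂; simp [h₂]⟩
  | @cons l₁ l₂ a h ih =>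
    by_cases hn : n ≤ l₂.length
    · obtain ⟨m, hm₁, hm₂, hm₃⟩ := ih h₁ hn
      exact ⟨m, hm₁, hm₂.cons a, hm₃⟩
    · simp only [List.length_cons] at h₂
      obtain ⟨m, hm₁, hm₂, hm₃⟩ := ih (n := n - 1) (by have := h.length_le; omega) (by omega)
      exact ⟨a :: m, hm₁.cons a, hm₂.cons_cons a, by simp; omega⟩
  | @cons_cons l₁ l₂ a _ ih =>
    simp only [List.length_cons] at h₁ h₂
    obtain ⟨m, hm₁, hm₂, hm₃⟩ := ih (n := n - 1) (by omega) (by omega)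
    exact ⟨a :: m, hm₁.cons_cons a, hm₂.cons_cons a, by simp; omega⟩

namespace IsUVAbsorbing

variable {Q : Set A} {u v : ℕ}

/-- Contract two factors `a, b` to some `c ∈ a∘b`; if the absorbed subproduct uses `c`, the
`𝒞`-property expands it back to a product with `a, b` and `v + 1 ≤ u` factors. -/
lemma succ (hQ : IsCHyperideal Q) (habs : IsUVAbsorbing Q u v) (hvu : v < u) {m : ℕ}
    (hum : u ≤ m) (hm : IsUVAbsorbing Q m v) : IsUVAbsorbing Q (m + 1) v := by
  refine ⟨habs.1, fun L hL hnon hLQ => ?_⟩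
  obtain ⟨a, b, rest, rfl⟩ : ∃ a b rest, L = a :: b :: rest := by
    match L with
    | a :: b :: rest => exact ⟨a, b, rest, rfl⟩
    | [] | [_] => simp at hL <;> omega
  obtain ⟨c, hc⟩ := hmul_nonempty a b
  have hc' : c ∈ hProd [a, b] := by rwa [hProd_pair]
  have hcrest : ∀ e ∈ c :: rest, ¬IsUnitH e := by
    intro e he
    rcases List.mem_cons.1 he with rfl | he
    · exact not_isUnitH_of_mem_hmul (hnon a (by simp)) hc
    · exact hnon e (by simp [he])
  obtain ⟨l', hl', hl'len, hl'Q⟩ := hm.2 (c :: rest) (by simpa using hL) hcrest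
    ((hProd_cons_subset_hProd_append rest (by simp) hc').trans hLQ)
  rcases List.sublist_cons_iff.1 hl' with hrest | ⟨s, rfl, hs⟩
  · exact ⟨l', (hrest.cons b).cons a, hl'len, hl'Q⟩
  have habQ : hProd (a :: b :: s) ⊆ Q := by
    obtain ⟨w, hw⟩ := hProd_nonempty (c :: s)
    exact hQ.2 _ (by simp) ⟨w, hProd_cons_subset_hProd_append s (by simp) hc' hw, hl'Q hw⟩
  obtain ⟨mid, hmid, hmidL, hmidlen⟩ :=
    ((hs.cons_cons b).cons_cons a).exists_sublist_length_eq (n := u)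
      (by simp at hl'len ⊢; omega) (by simp at hL ⊢; omega)
  obtain ⟨r, hr⟩ := hmid.exists_perm_append
  obtain ⟨l₃, h₃, h₃len, h₃Q⟩ := habs.2 mid hmidlen (fun e he => hnon e (hmidL.subset he))
    (by rw [hProd_perm hr]; exact hQ.1.hProd_append_subset (by simp) habQ r)
  exact ⟨l₃, h₃.trans hmidL, h₃len, h₃Q⟩

lemma of_le (hQ : IsCHyperideal Q) (habs : IsUVAbsorbing Q u v) (hvu : v < u) {m : ℕ}
    (hum : u ≤ m) : IsUVAbsorbing Q m v := by
  induction m, hum using Nat.le_induction with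
  | base => exact habs
  | succ m hum hm => exact succ hQ habs hvu hum hm

end IsUVAbsorbing

lemma List.map_finRange_update_perm {α : Type*} {n : ℕ} (z : Fin n → α) (j : Fin n) (x : α) :
    ((List.finRange n).map (Function.update z j x)).Perm
      (x :: ((List.finRange n).filter fun i => i ≠ j).map z) := by
  have h : (List.finRange n).Perm (j :: (List.finRange n).filter fun i => i ≠ j) := by
    refine (List.perm_cons_erase (List.mem_finRange j)).trans ?_
    rw [(List.nodup_finRange n).erase_eq_filter]
    exact .cons j (.of_eq (List.filter_congr fun _ _ => by rw [Bool.eq_iff_iff]; simp))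
  refine (h.map _).trans ?_
  rw [List.map_cons, Function.update_self, List.map_congr_left fun i hi =>
    Function.update_of_ne (by simpa using (List.mem_filter.1 hi).2) x z]

def Separates {α ι : Type*} (P : ι → Set α) (w : ι → α) : Prop :=
  ∀ i, w i ∈ P i ∧ ∀ j, j ≠ i → w i ∉ P j

namespace Separates

variable {α ι : Type*} {P : ι → Set α} {w : ι → α}

lemma injective (hw : Separates P w) : Function.Injective w := fun i k h => by
  by_contra hik
  exact (hw i).2 k (Ne.symm hik) (h ▸ (hw k).1)

lemma update [DecidableEq ι] (hw : Separates P w) {j : ι} {x : α} (hx : x ∈ P j)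
    (hxk : ∀ k, k ≠ j → x ∉ P k) : Separates P (Function.update w j x) := by
  intro i
  by_cases hij : i = j
  · subst hij
    simpa using ⟨hx, hxk⟩
  · simpa [Function.update_of_ne hij] using hw i

/-- Each `P i` contains a factor, and only `w i` qualifies. -/
lemma perm_of_hProd_subset {n : ℕ} {P : Fin n → Set A} {w : Fin n → A} (hw : Separates P w)
    (hP : ∀ i, IsPrimeHyperideal (P i)) {l : List A} (hl : ∀ e ∈ l, e ∈ Set.range w)
    (hlen : l.length ≤ n) (hsub : ∀ i, hProd l ⊆ P i) : l.Perm ((List.finRange n).map w) := by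
  have hmem : ∀ i, w i ∈ l := fun i => by
    obtain ⟨e, hel, heP⟩ := (hP i).exists_mem_of_hProd_subset (hsub i)
    obtain ⟨k, rfl⟩ := hl e hel
    obtain rfl : k = i := by
      by_contra hki
      exact (hw k).2 i (Ne.symm hki) heP
    exact hel
  have hnd : ((List.finRange n).map w).Nodup := (List.nodup_finRange n).map hw.injective
  refine ((hnd.subperm fun e he => ?_).perm_of_length_le (by simpa using hlen)).symm
  obtain ⟨i, -, rfl⟩ := List.mem_map.1 he
  exact hmem i

lemma hProd_map_finRange_subset {Q : Set A} {u v : ℕ} {P : Fin v → Set A} {w : Fin v → A}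
    (hw : Separates P w) (hQ : IsCHyperideal Q) (habs : IsUVAbsorbing Q u v) (hvu : v < u)
    (hP : ∀ i, IsPrimeHyperideal (P i)) (hQP : ∀ i, Q ⊆ P i)
    (hrad : ∀ t, (∀ i, t ∈ P i) → ∃ k, hProd (List.replicate (k + 1) t) ⊆ Q) (hv : 0 < v) :
    hProd ((List.finRange v).map w) ⊆ Q := by
  set W := (List.finRange v).map w
  have hW : W ≠ [] := by simp [W]; omega
  have hWrange : ∀ e ∈ W, e ∈ Set.range w := by simp [W]
  obtain ⟨t, ht⟩ := hProd_nonempty W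
  obtain ⟨k, hk⟩ := hrad t fun i =>
    (hP i).1.1.hProd_subset (List.mem_map_of_mem (List.mem_finRange i)) (hw i).1 ht
  -- `u` extra factors make the expanded product long enough to absorb
  set N := k + 1 + u
  have hpow : hProd (List.replicate N t) ⊆ Q := by
    rw [List.replicate_add]
    exact hQ.1.hProd_append_subset (by simp) hk _
  set L := (List.replicate N t).flatMap fun _ => W
  have hL : hProd (List.replicate N t) ⊆ hProd L :=
    hProd_subset_hProd_flatMap fun e he => by rw [List.eq_of_mem_replicate he]; exact ⟨ht, hW⟩
  have hLQ : hProd L ⊆ Q := by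
    obtain ⟨y, hy⟩ := hProd_nonempty (List.replicate N t)
    exact hQ.2 L (by simp [L, N, hW]) ⟨y, hL hy, hpow hy⟩
  have hLW : ∀ e ∈ L, e ∈ W := by simp [L]
  have hLlen : u ≤ L.length := by
    simp only [L, List.length_flatMap, List.map_replicate, List.sum_replicate, smul_eq_mul, W,
      List.length_map, List.length_finRange]
    calc u ≤ N := by omega
      _ ≤ N * v := Nat.le_mul_of_pos_right N hv
  have hLunit : ∀ e ∈ L, ¬IsUnitH e := fun e he => by
    obtain ⟨i, rfl⟩ := hWrange e (hLW e he)
    exact (hP i).1.not_isUnitH (hw i).1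
  obtain ⟨l₃, hl₃, hl₃len, hl₃Q⟩ := (habs.of_le hQ hvu hLlen).2 L rfl hLunit hLQ
  rwa [← hProd_perm (hw.perm_of_hProd_subset hP (fun e he => hWrange e (hLW e (hl₃.subset he)))
    hl₃len.le fun i => hl₃Q.trans (hQP i))]

/-- Prime avoidance: `a ∈ P j` is `(a + w) - w` for `w ∈ z j ∘ ∏ {z k : k ≠ j, a ∉ P k}`; here
`w ∈ J` as a multiple of `z j`, and `a + w` lies in no `P k` with `k ≠ j`. -/
lemma subset_of_forall_mem {n : ℕ} {P : Fin n → Set A} {z : Fin n → A} (hz : Separates P z)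
    (hP : ∀ i, IsPrimeHyperideal (P i) ∧ IsCHyperideal (P i)) {J : Set A} (hJ : IsHyperideal J)
    {j : Fin n} (hsep : ∀ x ∈ P j, (∀ k, k ≠ j → x ∉ P k) → x ∈ J) : P j ⊆ J := by
  classical
  intro a ha
  let l := z j :: ((List.finRange n).filter fun k => k ≠ j ∧ a ∉ P k).map z
  obtain ⟨w, hw⟩ := hProd_nonempty l
  have hwJ : w ∈ J := hJ.hProd_subset List.mem_cons_self (hsep _ (hz j).1 (hz j).2) hw
  have hwj : w ∈ P j := (hP j).1.1.1.hProd_subset List.mem_cons_self (hz j).1 hw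
  have hwk : ∀ k, k ≠ j → (w ∈ P k ↔ a ∉ P k) := by
    intro k hkj
    constructor
    · intro hwk hak
      refine (hP k).1.notMem_of_mem_hProd (hP k).2 (fun e he heP => ?_) hw hwk
      rcases List.mem_cons.1 he with rfl | he
      · exact (hz j).2 k hkj heP
      obtain ⟨i, hi, rfl⟩ := List.mem_map.1 he
      obtain rfl : i = k := by
        by_contra hik
        exact (hz i).2 k (Ne.symm hik) heP
      exact (by simpa using hi : i ≠ j ∧ a ∉ P i).2 hak
    · intro hak
      exact (hP k).1.1.1.hProd_subset
        (List.mem_cons_of_mem _ (List.mem_map_of_mem (by simp [hkj, hak]))) (hz k).1 hw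
  have hawJ : a + w ∈ J := hsep _ ((hP j).1.1.1.add_mem ha hwj) fun k hkj hawk => by
    by_cases hak : a ∈ P k
    · exact (hwk k hkj).1 (by simpa using (hP k).1.1.1.2.1 _ hawk _ hak) hak
    · exact hak (by simpa using (hP k).1.1.1.2.1 _ hawk _ ((hwk k hkj).2 hak))
  simpa using hJ.2.1 _ hawJ _ hwJ

end Separates

theorem sMul_hProd_subset_general (Q : Set A) (u v : ℕ) (hvu : v < u)
    (habs : IsUVAbsorbing Q u v) (hstrong : IsStrongCHyperideal Q)
    (P : Fin v → Set A)
    (hP : ∀ i, IsCHyperideal (P i) ∧ MinimalPrimeOver Q (P i))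
    (honly : ∀ P' : Set A, IsCHyperideal P' → MinimalPrimeOver Q P' → ∃ i, P' = P i)
    (z : Fin v → A) (hz : ∀ i, z i ∈ P i ∧ ∀ j, j ≠ i → z i ∉ P j) :
    ∀ j : Fin v,
      sMul (P j) (hProd (((List.finRange v).filter (fun i => i ≠ j)).map z)) ⊆ Q := by
  intro j e he
  have hQ := hstrong.isCHyperideal
  have hz : Separates P z := hz
  obtain ⟨a, ha, y, hy, he⟩ := mem_sMul.1 he
  refine hz.subset_of_forall_mem (fun i => ⟨(hP i).2.1, (hP i).1⟩) (isHyperideal_colonH hQ.1 y)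
    (fun x hx hxk => ?_) ha he
  have h := (hz.update hx hxk).hProd_map_finRange_subset hQ habs hvu (fun i => (hP i).2.1)
    (fun i => (hP i).2.2.1) (fun t ht => exists_hProd_replicate_subset hQ honly ht) j.pos
  rw [hProd_perm (List.map_finRange_update_perm z j x)] at h
  exact hQ.1.hmul_subset_of_hProd_cons_subset h hy

/-- if `Q` is a `(u,v)`-absorbing strong `𝒞`-hyperideal with `2 ≤ v < u`
whose only minimal prime `𝒞`-hyperideals are `P₁,…,P_v`, and `zᵢ ∈ Pᵢ∖⋃_{j≠i}P_j`,
then `P_j ∘ ∏_{i≠j} zᵢ ⊆ Q` for every `j`. -/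
theorem sMul_hProd_subset (Q : Set A) (u v : ℕ) (h2v : 2 ≤ v) (hvu : v < u)
    (habs : IsUVAbsorbing Q u v) (hstrong : IsStrongCHyperideal Q)
    (P : Fin v → Set A) (hinj : Function.Injective P)
    (hP : ∀ i, IsCHyperideal (P i) ∧ MinimalPrimeOver Q (P i))
    (honly : ∀ P' : Set A, IsCHyperideal P' → MinimalPrimeOver Q P' → ∃ i, P' = P i)
    (z : Fin v → A) (hz : ∀ i, z i ∈ P i ∧ ∀ j, j ≠ i → z i ∉ P j) :
    ∀ j : Fin v,
      sMul (P j) (hProd (((List.finRange v).filter (fun i => i ≠ j)).map z)) ⊆ Q :=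
  sMul_hProd_subset_general Q u v hvu habs hstrong P hP honly z hz
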